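/- arXiv:2406.07132 — 2 statements merged into one kernel-verified Lean document; each statement's English description precedes it below -/
import Mathlib

section
/- Let $k$ and $n$ be positive integers with $n \geq k+2$. The signless Laplacian spectral radius of the graph $K_1 \vee (K_{n-k-2} \cup (k+1)K_1)$ equals $\theta(k,n)$, the largest real root of $x^{3}-(3n-2k-5)x^{2}+n(2n-2k-5)x-2(n-k-3)(n-k-2)=0$. -/
/-!
The vertices of `K₁ ∨ (K_m ∪ r K₁)` split into the centre, the `m` clique vertices and the `r`
pendant vertices, an equitable partition whose quotient matrix
`[[m + r, m, r], [1, 2m - 1, 0], [1, 0, 1]]` has characteristic polynomial the given cubic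
(with `m = n - k - 2`, `r = k + 1`). For a root `θ > max (2m - 1) 1` the vector equal to `1`,
`1 / (θ - 2m + 1)`, `1 / (θ - 1)` on the three classes is a positive eigenvector of `Q` for `θ`.
Pairing a positive left eigenvector of a nonnegative matrix with `|w|` for any eigenvector `w`
bounds every real eigenvalue by `θ`, so `q = θ`. Any other root is either at most
`max (2m - 1) 1 < θ` or, by the same argument, equal to `q = θ`.
-/

/-- The signless Laplacian matrix `Q(G) = D(G) + A(G)` of a simple graph, over `ℝ`. -/
noncomputable def signlessLap {V : Type*} [Fintype V] [DecidableEq V] (G : SimpleGraph V) :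
    Matrix V V ℝ :=
  letI : DecidableRel G.Adj := Classical.decRel _
  G.degMatrix ℝ + G.adjMatrix ℝ

/-- The signless Laplacian spectral radius `q(G)`: the largest eigenvalue of `Q(G)`. -/
noncomputable def qRadius {V : Type*} [Fintype V] [DecidableEq V] (G : SimpleGraph V) : ℝ :=
  sSup (spectrum ℝ (signlessLap G))

/-- `G` has a spanning tree whose leaf degree is at most `k`, i.e. a spanning tree `T`
in which every vertex is adjacent (in `T`) to at most `k` leaves of `T`. -/
def HasSpanningTreeWithLeafDegLE {V : Type*} (G : SimpleGraph V) (k : ℕ) : Prop :=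
  ∃ T : SimpleGraph V, T ≤ G ∧ T.IsTree ∧
    ∀ v : V, {u : V | T.Adj v u ∧ (T.neighborSet u).ncard = 1}.ncard ≤ k

/-- The join `G ∨ H` of two vertex-disjoint graphs: all edges between the two parts. -/
def SimpleGraph.graphJoin {α β : Type*} (G : SimpleGraph α) (H : SimpleGraph β) :
    SimpleGraph (α ⊕ β) where
  Adj x y :=
    match x, y with
    | Sum.inl a, Sum.inl b => G.Adj a b
    | Sum.inr a, Sum.inr b => H.Adj a b
    | Sum.inl _, Sum.inr _ => True
    | Sum.inr _, Sum.inl _ => True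
  symm := by constructor; rintro (a | a) (b | b) h <;> first | trivial | exact G.adj_symm h | exact H.adj_symm h
  loopless := by constructor; rintro (a | a) h <;> first | exact G.loopless.irrefl _ h | exact H.loopless.irrefl _ h

/-- The disjoint union `G ∪ H` of two vertex-disjoint graphs. -/
def SimpleGraph.graphDisjUnion {α β : Type*} (G : SimpleGraph α) (H : SimpleGraph β) :
    SimpleGraph (α ⊕ β) where
  Adj x y :=
    match x, y with
    | Sum.inl a, Sum.inl b => G.Adj a b
    | Sum.inr a, Sum.inr b => H.Adj a b
    | _, _ => False
  symm := by constructor; rintro (a | a) (b | b) h <;> first | trivial | exact G.adj_symm h | exact H.adj_symm h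
  loopless := by constructor; rintro (a | a) h <;> first | exact G.loopless.irrefl _ h | exact H.loopless.irrefl _ h

open Matrix Finset Polynomial

section SignlessLaplacian

variable {V : Type*} [Fintype V] [DecidableEq V] (G : SimpleGraph V)

theorem signlessLap_eq [DecidableRel G.Adj] : signlessLap G = G.degMatrix ℝ + G.adjMatrix ℝ := by
  unfold signlessLap
  congr!

theorem isSymm_signlessLap : (signlessLap G).IsSymm := by
  classical
  rw [signlessLap_eq]
  exact (G.isSymm_degMatrix ℝ).add G.isSymm_adjMatrix

theorem signlessLap_apply_nonneg (i j : V) : 0 ≤ signlessLap G i j := by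
  classical
  rw [signlessLap_eq]
  simp only [Matrix.add_apply, SimpleGraph.degMatrix, diagonal_apply, SimpleGraph.adjMatrix_apply]
  split_ifs <;> positivity

theorem signlessLap_mulVec_apply [DecidableRel G.Adj] (v : V → ℝ) (x : V) :
    (signlessLap G *ᵥ v) x = ∑ y ∈ G.neighborFinset x, (v x + v y) := by
  rw [signlessLap_eq, add_mulVec, Pi.add_apply, SimpleGraph.degMatrix_mulVec_apply,
    SimpleGraph.adjMatrix_mulVec_apply, sum_add_distrib, sum_const,
    SimpleGraph.card_neighborFinset_eq_degree, nsmul_eq_mul]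

end SignlessLaplacian

theorem Matrix.exists_mulVec_eq_smul_of_mem_spectrum {ι K : Type*} [Fintype ι] [DecidableEq ι]
    [Field K] {M : Matrix ι ι K} {μ : K} (hμ : μ ∈ spectrum K M) :
    ∃ w ≠ 0, M *ᵥ w = μ • w := by
  rw [← spectrum_toLin', ← Module.End.hasEigenvalue_iff_mem_spectrum] at hμ
  obtain ⟨w, hw⟩ := hμ.exists_hasEigenvector
  exact ⟨w, hw.2, by simpa using hw.apply_eq_smul⟩

theorem Matrix.abs_le_of_mem_spectrum_of_vecMul_eq_smul {ι R : Type*} [Fintype ι] [DecidableEq ι]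
    [Field R] [LinearOrder R] [IsStrictOrderedRing R] {M : Matrix ι ι R}
    (hM : ∀ i j, 0 ≤ M i j) {v : ι → R} (hv : ∀ i, 0 < v i) {θ : R} (hvM : v ᵥ* M = θ • v)
    {μ : R} (hμ : μ ∈ spectrum R M) : |μ| ≤ θ := by
  obtain ⟨w, hw, hMw⟩ := exists_mulVec_eq_smul_of_mem_spectrum hμ
  have hle : |μ| • |w| ≤ M *ᵥ |w| := fun i => calc
    |μ| * |w i| = |∑ j, M i j * w j| := by
      rw [← abs_mul, ← smul_eq_mul, ← Pi.smul_apply, ← hMw]; rfl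
    _ ≤ ∑ j, |M i j * w j| := abs_sum_le_sum_abs _ _
    _ = ∑ j, M i j * |w j| := by simp [abs_mul, abs_of_nonneg (hM _ _)]
  have hpos : 0 < v ⬝ᵥ |w| := by
    obtain ⟨i, hi⟩ := Function.ne_iff.mp hw
    exact sum_pos' (fun j _ => mul_nonneg (hv j).le (abs_nonneg _))
      ⟨i, mem_univ _, mul_pos (hv i) (abs_pos.mpr hi)⟩
  have hbound : |μ| * (v ⬝ᵥ |w|) ≤ θ * (v ⬝ᵥ |w|) := calc
    |μ| * (v ⬝ᵥ |w|) = v ⬝ᵥ (|μ| • |w|) := by rw [dotProduct_smul, smul_eq_mul]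
    _ ≤ v ⬝ᵥ (M *ᵥ |w|) := dotProduct_le_dotProduct_of_nonneg_left hle fun i => (hv i).le
    _ = θ * (v ⬝ᵥ |w|) := by rw [dotProduct_mulVec, hvM, smul_dotProduct, smul_eq_mul]
  exact le_of_mul_le_mul_right hbound hpos

theorem qRadius_eq_of_mulVec_eq_smul {V : Type*} [Fintype V] [DecidableEq V] [Nonempty V]
    {G : SimpleGraph V} {v : V → ℝ} (hv : ∀ i, 0 < v i) {θ : ℝ}
    (h : signlessLap G *ᵥ v = θ • v) : qRadius G = θ := by
  have hmem : θ ∈ spectrum ℝ (signlessLap G) := by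
    rw [← spectrum_toLin', ← Module.End.hasEigenvalue_iff_mem_spectrum]
    refine Module.End.hasEigenvalue_of_hasEigenvector
      (Module.End.hasEigenvector_iff.mpr ⟨by simpa using h, ?_⟩)
    exact fun h0 => (hv (Classical.arbitrary V)).ne' (congrFun h0 _)
  have hvQ : v ᵥ* signlessLap G = θ • v := by
    rw [← mulVec_transpose, (isSymm_signlessLap G).eq, h]
  refine IsGreatest.csSup_eq ⟨hmem, fun μ hμ => ?_⟩
  exact (le_abs_self μ).trans
    (abs_le_of_mem_spectrum_of_vecMul_eq_smul (signlessLap_apply_nonneg G) hv hvQ hμ)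

theorem Polynomial.exists_isRoot_gt_of_eval_neg {P : ℝ[X]} (hdeg : 0 < P.degree)
    (hlc : 0 ≤ P.leadingCoeff) {t : ℝ} (ht : P.eval t < 0) : ∃ x, t < x ∧ P.IsRoot x := by
  obtain ⟨s, hs⟩ := Filter.eventually_atTop.mp
    ((P.tendsto_atTop_of_leadingCoeff_nonneg hdeg hlc).eventually_gt_atTop 0)
  obtain ⟨x, hx, hPx⟩ := intermediate_value_Ioo (le_max_right s t) P.continuous.continuousOn
    ⟨ht, hs _ (le_max_left _ _)⟩
  exact ⟨x, hx.1, hPx⟩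

def extremalGraph (m r : ℕ) : SimpleGraph (Fin 1 ⊕ (Fin m ⊕ Fin r)) :=
  (⊤ : SimpleGraph (Fin 1)).graphJoin ((⊤ : SimpleGraph (Fin m)).graphDisjUnion ⊥)

noncomputable def extremalCubic (m r : ℕ) : ℝ[X] :=
  (X - C (m + r : ℝ)) * (X - C (2 * m - 1 : ℝ)) * (X - 1) - C (m : ℝ) * (X - 1)
    - C (r : ℝ) * (X - C (2 * m - 1 : ℝ))

theorem monic_extremalCubic (m r : ℕ) : (extremalCubic m r).Monic := by
  unfold extremalCubic; monicity!

theorem natDegree_extremalCubic (m r : ℕ) : (extremalCubic m r).natDegree = 3 := by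
  unfold extremalCubic; compute_degree!

theorem eval_extremalCubic (m r : ℕ) (x : ℝ) : (extremalCubic m r).eval x
    = (x - (m + r)) * (x - (2 * m - 1)) * (x - 1) - m * (x - 1) - r * (x - (2 * m - 1)) := by
  simp [extremalCubic]

theorem eval_extremalCubic_of_add_two_le {k n : ℕ} (hnk : k + 2 ≤ n) (x : ℝ) :
    (extremalCubic (n - k - 2) (k + 1)).eval x = x ^ 3 - (3 * (n : ℝ) - 2 * k - 5) * x ^ 2
      + (n : ℝ) * (2 * (n : ℝ) - 2 * k - 5) * x - 2 * ((n : ℝ) - k - 3) * ((n : ℝ) - k - 2) := by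
  rw [eval_extremalCubic, Nat.sub_sub, Nat.cast_sub hnk]
  push_cast
  ring

theorem exists_isRoot_extremalCubic_gt {m r : ℕ} (hr : 0 < r) :
    ∃ θ : ℝ, 1 < θ ∧ 2 * m - 1 < θ ∧ (extremalCubic m r).IsRoot θ := by
  have hdeg : 0 < (extremalCubic m r).degree := by
    rw [degree_eq_natDegree (monic_extremalCubic m r).ne_zero, natDegree_extremalCubic]
    norm_num
  have hlc : 0 ≤ (extremalCubic m r).leadingCoeff := by
    rw [(monic_extremalCubic m r).leadingCoeff]; exact zero_le_one
  have hr' : (1 : ℝ) ≤ r := by exact_mod_cast hr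
  -- the cubic takes the values `-(m (m - 1) + r (r + 1))` at `m + r` and `-2m (m - 1)` at `2m - 1`
  rcases le_total (2 * m - 1 : ℝ) (m + r) with h | h
  · have hm : (0 : ℝ) ≤ m * (m - 1) := by
      rcases Nat.eq_zero_or_pos m with rfl | hm
      · simp
      · have : (1 : ℝ) ≤ m := by exact_mod_cast hm
        nlinarith
    obtain ⟨θ, hθ, hroot⟩ := exists_isRoot_gt_of_eval_neg hdeg hlc (t := m + r) (by
      rw [eval_extremalCubic]; nlinarith)
    exact ⟨θ, by linarith, by linarith, hroot⟩
  · obtain ⟨θ, hθ, hroot⟩ := exists_isRoot_gt_of_eval_neg hdeg hlc (t := 2 * m - 1) (by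
      rw [eval_extremalCubic]; nlinarith)
    exact ⟨θ, by linarith, hθ, hroot⟩

theorem signlessLap_extremalGraph_mulVec {m r : ℕ} {θ b c : ℝ} (hb : b * (θ - (2 * m - 1)) = 1)
    (hc : c * (θ - 1) = 1) (hθ : (extremalCubic m r).IsRoot θ) :
    signlessLap (extremalGraph m r) *ᵥ Sum.elim (fun _ => 1) (Sum.elim (fun _ => b) (fun _ => c))
      = θ • Sum.elim (fun _ => 1) (Sum.elim (fun _ => b) (fun _ => c)) := by
  classical
  rw [IsRoot.def, eval_extremalCubic] at hθ
  ext x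
  rw [signlessLap_mulVec_apply, SimpleGraph.neighborFinset_eq_filter, sum_filter,
    Fintype.sum_sum_type, Fintype.sum_sum_type]
  rcases x with _ | i | _ <;>
    simp only [extremalGraph, SimpleGraph.graphJoin, SimpleGraph.graphDisjUnion,
      SimpleGraph.top_adj, SimpleGraph.bot_adj, Subsingleton.elim _ (0 : Fin 1), ne_eq, ite_not,
      ↓reduceIte, univ_unique, Sum.elim_inl, Sum.elim_inr, sum_ite,
      sum_const, card_univ, Fintype.card_fin, card_singleton, filter_not,
      filter_eq, mem_univ, card_univ_sdiff, nsmul_eq_mul, Pi.smul_apply, smul_eq_mul]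
  · -- multiplied by `b (θ - (2m - 1)) * c (θ - 1) = 1`, the goal becomes `b c` times the cubic
    linear_combination (-b * c) * hθ + (b * c * m * (θ - 1) - (m + m * b + (r + r * c) - θ)) * hb
      + (b * c * r * (θ - (2 * m - 1)) - (m + m * b + (r + r * c) - θ) * b * (θ - (2 * m - 1))) * hc
  · rw [Nat.cast_sub (Fin.pos i)]
    linear_combination -hb
  · linear_combination -hc

theorem qRadius_extremalGraph_eq_of_isRoot {m r : ℕ} {θ : ℝ} (h1 : 1 < θ) (hm : 2 * m - 1 < θ)
    (hθ : (extremalCubic m r).IsRoot θ) : qRadius (extremalGraph m r) = θ := by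
  refine qRadius_eq_of_mulVec_eq_smul ?_ (signlessLap_extremalGraph_mulVec
    (inv_mul_cancel₀ (sub_pos.mpr hm).ne') (inv_mul_cancel₀ (sub_pos.mpr h1).ne') hθ)
  rintro (_ | _ | _)
  · exact one_pos
  · exact inv_pos.mpr (sub_pos.mpr hm)
  · exact inv_pos.mpr (sub_pos.mpr h1)

theorem qRadius_extremal_graph_eq_largest_root_general (k n : ℕ) (hnk : k + 2 ≤ n) :
    ((qRadius ((⊤ : SimpleGraph (Fin 1)).graphJoin ((⊤ : SimpleGraph (Fin (n - k - 2))).graphDisjUnion (⊥ : SimpleGraph (Fin (k + 1)))))) ^ 3 - (3 * (n : ℝ) - 2 * k - 5) * (qRadius ((⊤ : SimpleGraph (Fin 1)).graphJoin ((⊤ : SimpleGraph (Fin (n - k - 2))).graphDisjUnion (⊥ : SimpleGraph (Fin (k + 1)))))) ^ 2 + (n : ℝ) * (2 * (n : ℝ) - 2 * k - 5) * (qRadius ((⊤ : SimpleGraph (Fin 1)).graphJoin ((⊤ : SimpleGraph (Fin (n - k - 2))).graphDisjUnion (⊥ : SimpleGraph (Fin (k + 1)))))) - 2 * ((n : ℝ)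 - k - 3) * ((n : ℝ) - k - 2)) = 0 ∧
      ∀ x : ℝ, x ^ 3 - (3 * (n : ℝ) - 2 * k - 5) * x ^ 2 + (n : ℝ) * (2 * (n : ℝ) - 2 * k - 5) * x - 2 * ((n : ℝ) - k - 3) * ((n : ℝ) - k - 2) = 0 →
        x ≤ qRadius ((⊤ : SimpleGraph (Fin 1)).graphJoin
      ((⊤ : SimpleGraph (Fin (n - k - 2))).graphDisjUnion (⊥ : SimpleGraph (Fin (k + 1))))) := by
  obtain ⟨θ, h1, hm, hθ⟩ := exists_isRoot_extremalCubic_gt (m := n - k - 2) k.succ_pos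
  have hq : qRadius (extremalGraph (n - k - 2) (k + 1)) = θ :=
    qRadius_extremalGraph_eq_of_isRoot h1 hm hθ
  simp only [← eval_extremalCubic_of_add_two_le hnk]
  refine ⟨hq ▸ hθ, fun x hx => ?_⟩
  by_cases hx' : 1 < x ∧ 2 * ((n - k - 2 : ℕ) : ℝ) - 1 < x
  · exact (qRadius_extremalGraph_eq_of_isRoot hx'.1 hx'.2 hx).ge
  · rw [not_and_or, not_lt, not_lt] at hx'
    change x ≤ qRadius (extremalGraph (n - k - 2) (k + 1))
    rcases hx' with hx' | hx' <;> linarith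

/-- The signless Laplacian spectral radius of `K₁ ∨ (K_(n-k-2) ∪ (k+1)K₁)` is the largest
real root of `x³-(3n-2k-5)x²+n(2n-2k-5)x-2(n-k-3)(n-k-2) = 0`. -/
theorem qRadius_extremal_graph_eq_largest_root (k n : ℕ) (hk : 1 ≤ k) (hnk : k + 2 ≤ n) :
    ((qRadius ((⊤ : SimpleGraph (Fin 1)).graphJoin ((⊤ : SimpleGraph (Fin (n - k - 2))).graphDisjUnion (⊥ : SimpleGraph (Fin (k + 1)))))) ^ 3 - (3 * (n : ℝ) - 2 * k - 5) * (qRadius ((⊤ : SimpleGraph (Fin 1)).graphJoin ((⊤ : SimpleGraph (Fin (n - k - 2))).graphDisjUnion (⊥ : SimpleGraph (Fin (k + 1)))))) ^ 2 + (n : ℝ) * (2 * (n : ℝ) - 2 * k - 5) * (qRadius ((⊤ : SimpleGraph (Fin 1)).graphJoin ((⊤ : SimpleGraph (Fin (n - k - 2))).graphDisjUnion (⊥ : SimpleGraph (Fin (k + 1)))))) - 2 * ((n : ℝ) - k - 3) * ((n : ℝ) - k - 2)) = 0 ∧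
      ∀ x : ℝ, x ^ 3 - (3 * (n : ℝ) - 2 * k - 5) * x ^ 2 + (n : ℝ) * (2 * (n : ℝ) - 2 * k - 5) * x - 2 * ((n : ℝ) - k - 3) * ((n : ℝ) - k - 2) = 0 →
        x ≤ qRadius ((⊤ : SimpleGraph (Fin 1)).graphJoin
      ((⊤ : SimpleGraph (Fin (n - k - 2))).graphDisjUnion (⊥ : SimpleGraph (Fin (k + 1))))) :=
  qRadius_extremal_graph_eq_largest_root_general k n hnk
end

section
/- The signless Laplacian spectral radius of the graph $K_2 \vee 8K_1$ equals $6 + 4\sqrt{2}$, and $K_2 \vee 8K_1$ contains no spanning tree with leaf degree at most $3$. -/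
/-!
The vector equal to `2 + 2√2` on the two vertices of `K₂` and to `1` on the eight others is a
positive eigenvector of `Q` for `6 + 4√2`. For a matrix with nonnegative entries, an eigenvalue
with a positive eigenvector bounds the modulus of every other eigenvalue, so it is `q`.

In a spanning tree of `K₂ ∨ tK₁` at most one vertex of `tK₁` is adjacent to both vertices of
`K₂`, since two of them would close a 4-cycle. Every other vertex of `tK₁` is a leaf hanging from
one of the two, so leaf degree at most `k` forces `t ≤ 2k + 1`, which fails for `t = 8`, `k = 3`.
-/

namespace Matrix

variable {n K : Type*} [Fintype n]

theorem mem_spectrum_iff_exists_mulVec_eq_smul [DecidableEq n] [Field K] {A : Matrix n n K}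
    {μ : K} : μ ∈ spectrum K A ↔ ∃ v ≠ 0, A *ᵥ v = μ • v := by
  rw [← spectrum_toLin', ← Module.End.hasEigenvalue_iff_mem_spectrum]
  constructor
  · intro h
    obtain ⟨v, hv⟩ := h.exists_hasEigenvector
    exact ⟨v, hv.2, by simpa using hv.apply_eq_smul⟩
  · rintro ⟨v, hv0, hv⟩
    exact Module.End.hasEigenvalue_of_hasEigenvector
      ⟨Module.End.mem_eigenspace_iff.mpr (by simpa using hv), hv0⟩

variable [Field K] [LinearOrder K] [IsStrictOrderedRing K] {A : Matrix n n K} {v w : n → K}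
  {r μ : K}

/-- Collatz–Wielandt: compare `w` with the positive eigenvector `v` at a coordinate where
`|w i| / v i` is largest. -/
theorem abs_le_of_mulVec_eq_smul_of_pos (hA : ∀ i j, 0 ≤ A i j) (hv : ∀ i, 0 < v i)
    (hAv : A *ᵥ v = r • v) (hw : w ≠ 0) (hAw : A *ᵥ w = μ • w) : |μ| ≤ r := by
  obtain ⟨j, hj⟩ := Function.ne_iff.mp hw
  have : Nonempty n := ⟨j⟩
  obtain ⟨i, hi⟩ := Finite.exists_max fun k => |w k| / v k
  set c := |w i| / v i
  have hc : 0 < c := (div_pos (abs_pos.mpr hj) (hv j)).trans_le (hi j)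
  have hwi : 0 < |w i| := by simpa [c, div_pos_iff, hv i, (hv i).not_gt] using hc
  have hdom : ∀ k, |w k| ≤ c * v k := fun k => (div_le_iff₀ (hv k)).mp (hi k)
  have key : |μ| * |w i| ≤ r * |w i| := calc
    |μ| * |w i| = |∑ k, A i k * w k| := by
      rw [← abs_mul, ← smul_eq_mul, ← Pi.smul_apply, ← hAw]; rfl
    _ ≤ ∑ k, A i k * (c * v k) := by
      refine (Finset.abs_sum_le_sum_abs _ _).trans (Finset.sum_le_sum fun k _ => ?_)
      rw [abs_mul, abs_of_nonneg (hA i k)]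
      exact mul_le_mul_of_nonneg_left (hdom k) (hA i k)
    _ = c * (A *ᵥ v) i := by
      simp only [mulVec, dotProduct, Finset.mul_sum]
      exact Finset.sum_congr rfl fun k _ => by ring
    _ = c * (r * v i) := by rw [hAv]; rfl
    _ = r * |w i| := by
      simp only [c]
      field_simp [(hv i).ne']
  exact le_of_mul_le_mul_right key hwi

theorem isGreatest_spectrum_of_pos_eigenvector [DecidableEq n] [Nonempty n]
    (hA : ∀ i j, 0 ≤ A i j) (hv : ∀ i, 0 < v i) (hAv : A *ᵥ v = r • v) :
    IsGreatest (spectrum K A) r := by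
  refine ⟨mem_spectrum_iff_exists_mulVec_eq_smul.mpr ⟨v, ?_, hAv⟩, fun μ hμ => ?_⟩
  · exact fun h => (hv (Classical.arbitrary n)).ne' (congrFun h _)
  · obtain ⟨w, hw, hAw⟩ := mem_spectrum_iff_exists_mulVec_eq_smul.mp hμ
    exact (le_abs_self μ).trans (abs_le_of_mulVec_eq_smul_of_pos hA hv hAv hw hAw)

end Matrix

namespace SimpleGraph

section SignlessLap

open Matrix

variable {V : Type*} [Fintype V] [DecidableEq V]

theorem signlessLap_eq (G : SimpleGraph V) [DecidableRel G.Adj] :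
    signlessLap G = G.degMatrix ℝ + G.adjMatrix ℝ := by
  unfold signlessLap
  congr!

theorem signlessLap_nonneg (G : SimpleGraph V) (i j : V) : 0 ≤ signlessLap G i j := by
  classical
  rw [signlessLap_eq, Matrix.add_apply, degMatrix, Matrix.diagonal_apply, adjMatrix_apply]
  refine add_nonneg ?_ ?_ <;> split_ifs <;> positivity

theorem signlessLap_mulVec_apply (G : SimpleGraph V) [DecidableRel G.Adj] (v : V → ℝ) (i : V) :
    (signlessLap G *ᵥ v) i = ∑ j ∈ G.neighborFinset i, (v i + v j) := by
  rw [signlessLap_eq, Matrix.add_mulVec, Pi.add_apply, degMatrix_mulVec_apply,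
    adjMatrix_mulVec_apply, Finset.sum_add_distrib, Finset.sum_const, nsmul_eq_mul,
    card_neighborFinset_eq_degree]

variable {α β : Type*} {G : SimpleGraph α} {H : SimpleGraph β}

@[simp]
theorem graphJoin_adj_inl_inl {a b : α} : (G.graphJoin H).Adj (.inl a) (.inl b) ↔ G.Adj a b :=
  Iff.rfl

@[simp]
theorem graphJoin_adj_inr_inr {a b : β} : (G.graphJoin H).Adj (.inr a) (.inr b) ↔ H.Adj a b :=
  Iff.rfl

@[simp]
theorem graphJoin_adj_inl_inr {a : α} {b : β} : (G.graphJoin H).Adj (.inl a) (.inr b) :=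
  trivial

@[simp]
theorem graphJoin_adj_inr_inl {a : α} {b : β} : (G.graphJoin H).Adj (.inr b) (.inl a) :=
  trivial

variable [Fintype α] [DecidableEq α] [Fintype β] [DecidableEq β]

theorem signlessLap_top_join_bot_mulVec_elim (x y : ℝ) :
    signlessLap ((⊤ : SimpleGraph α).graphJoin (⊥ : SimpleGraph β)) *ᵥ
        Sum.elim (fun _ => x) (fun _ => y) =
      Sum.elim (fun _ => 2 * (Fintype.card α - 1) * x + Fintype.card β * (x + y))
        (fun _ => Fintype.card α * (x + y)) := by
  classical
  ext (a | b) <;>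
  simp only [signlessLap_mulVec_apply, neighborFinset_eq_filter, Finset.sum_filter,
    Fintype.sum_sum_type]
  · simp only [Sum.elim_inl, Sum.elim_inr, top_adj, graphJoin_adj_inl_inl,
      graphJoin_adj_inl_inr, if_true, Finset.sum_const, Finset.card_univ, nsmul_eq_mul]
    rw [Finset.sum_ite, Finset.sum_const_zero, add_zero, Finset.sum_const, Finset.filter_ne,
      Finset.card_erase_of_mem (Finset.mem_univ a), nsmul_eq_mul,
      Finset.card_univ, Nat.cast_pred (Fintype.card_pos_iff.mpr ⟨a⟩)]
    ring
  · simp only [Sum.elim_inl, Sum.elim_inr, graphJoin_adj_inr_inl, graphJoin_adj_inr_inr, bot_adj,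
      if_true, if_false, Finset.sum_const_zero, add_zero, Finset.sum_const, Finset.card_univ,
      nsmul_eq_mul]
    ring

end SignlessLap

section SpanningTree

variable {V : Type*} {T : SimpleGraph V}

/-- Two common neighbours of distinct vertices would close a 4-cycle. -/
theorem IsAcyclic.eq_of_adj_of_adj (hT : T.IsAcyclic) {u w x y : V} (huw : u ≠ w)
    (hux : T.Adj u x) (hxw : T.Adj x w) (huy : T.Adj u y) (hyw : T.Adj y w) : x = y := by
  have hpx : (Walk.cons hux (Walk.cons hxw Walk.nil)).IsPath := by
    simp [Walk.isPath_def, hux.ne, hxw.ne, huw]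
  have hpy : (Walk.cons huy (Walk.cons hyw Walk.nil)).IsPath := by
    simp [Walk.isPath_def, huy.ne, hyw.ne, huw]
  have hxy := (hT.subsingleton_path u w).elim ⟨_, hpx⟩ ⟨_, hpy⟩
  simpa using congrArg (fun p : T.Path u w => p.1.support) hxy

variable {β : Type*} {T : SimpleGraph (Fin 2 ⊕ β)}

theorem exists_adj_inl_of_le_top_join_bot (hT : T ≤ (⊤ : SimpleGraph (Fin 2)).graphJoin ⊥)
    (hconn : T.Preconnected) (b : β) : ∃ i, T.Adj (.inl i) (.inr b) := by
  have : Nontrivial (Fin 2 ⊕ β) := ⟨⟨.inl 0, .inl 1, by simp⟩⟩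
  obtain ⟨u | c, hu⟩ := hconn.exists_adj_of_nontrivial (.inr b)
  · exact ⟨u, hu.symm⟩
  · exact absurd (hT hu) (by simp)

theorem neighborSet_inr_eq_singleton_of_le_top_join_bot
    (hT : T ≤ (⊤ : SimpleGraph (Fin 2)).graphJoin ⊥) {i : Fin 2} {b : β}
    (hib : T.Adj (.inl i) (.inr b))
    (hnot : ¬ (T.Adj (.inl 0) (.inr b) ∧ T.Adj (.inl 1) (.inr b))) :
    T.neighborSet (.inr b) = {.inl i} := by
  ext (j | c)
  · simp only [mem_neighborSet, Set.mem_singleton_iff, Sum.inl.injEq]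
    refine ⟨fun hjb => ?_, fun hji => hji ▸ hib.symm⟩
    by_contra hji
    apply hnot
    fin_cases i <;> fin_cases j <;> simp_all [T.adj_comm]
  · simpa using fun h => absurd (hT h) (by simp)

end SpanningTree

end SimpleGraph

theorem HasSpanningTreeWithLeafDegLE.card_le_top_join_bot {β : Type*} [Finite β] {k : ℕ}
    (h : HasSpanningTreeWithLeafDegLE
      ((⊤ : SimpleGraph (Fin 2)).graphJoin (⊥ : SimpleGraph β)) k) :
    Nat.card β ≤ 2 * k + 1 := by
  obtain ⟨T, hTG, hTree, hleaf⟩ := h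
  let B : Set β := {b | T.Adj (.inl 0) (.inr b) ∧ T.Adj (.inl 1) (.inr b)}
  let L (i : Fin 2) : Set β :=
    Sum.inr ⁻¹' {u | T.Adj (.inl i) u ∧ (T.neighborSet u).ncard = 1}
  have hB : B.ncard ≤ 1 := (Set.ncard_le_one).mpr fun a ha b hb => Sum.inr_injective <|
    hTree.isAcyclic.eq_of_adj_of_adj (by simp) ha.1 ha.2.symm hb.1 hb.2.symm
  have hL (i : Fin 2) : (L i).ncard ≤ k := calc
    (L i).ncard = (Sum.inr '' L i).ncard :=
      (Set.ncard_image_of_injective _ Sum.inr_injective).symm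
    _ ≤ _ := Set.ncard_le_ncard (Set.image_preimage_subset _ _) (Set.toFinite _)
    _ ≤ k := hleaf _
  have hcover : Set.univ ⊆ L 0 ∪ L 1 ∪ B := by
    intro b _
    by_cases hb : b ∈ B
    · exact Or.inr hb
    obtain ⟨i, hi⟩ :=
      SimpleGraph.exists_adj_inl_of_le_top_join_bot hTG hTree.connected.preconnected b
    have hleafb := SimpleGraph.neighborSet_inr_eq_singleton_of_le_top_join_bot hTG hi hb
    fin_cases i
    · exact Or.inl (Or.inl ⟨hi, by simp [hleafb]⟩)
    · exact Or.inl (Or.inr ⟨hi, by simp [hleafb]⟩)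
  calc Nat.card β = (Set.univ : Set β).ncard := Set.ncard_univ β |>.symm
    _ ≤ (L 0 ∪ L 1 ∪ B).ncard := Set.ncard_le_ncard hcover
    _ ≤ (L 0).ncard + (L 1).ncard + B.ncard :=
      (Set.ncard_union_le _ _).trans (Nat.add_le_add_right (Set.ncard_union_le _ _) _)
    _ ≤ 2 * k + 1 := by linarith [hL 0, hL 1]

open Matrix in
theorem qRadius_eq_of_pos_eigenvector {V : Type*} [Fintype V] [DecidableEq V] [Nonempty V]
    {G : SimpleGraph V} {v : V → ℝ} {r : ℝ} (hv : ∀ i, 0 < v i)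
    (hGv : signlessLap G *ᵥ v = r • v) : qRadius G = r :=
  (Matrix.isGreatest_spectrum_of_pos_eigenvector (SimpleGraph.signlessLap_nonneg G) hv hGv).csSup_eq

/-- `6 + 4√2` is the larger root of `μ² - 12μ + 4`, the characteristic polynomial of the
quotient matrix `!![10, 8; 2, 2]` of `Q` on the two sides of the join. -/
theorem qRadius_K2_join_8K1_eq :
    qRadius ((⊤ : SimpleGraph (Fin 2)).graphJoin (⊥ : SimpleGraph (Fin 8))) = 6 + 4 * √2 := by
  have hsq : √2 ^ 2 = 2 := Real.sq_sqrt (by norm_num)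
  refine qRadius_eq_of_pos_eigenvector (v := Sum.elim (fun _ => 2 + 2 * √2) fun _ => 1) ?_ ?_
  · rintro (a | b) <;> simp only [Sum.elim_inl, Sum.elim_inr] <;> positivity
  · rw [SimpleGraph.signlessLap_top_join_bot_mulVec_elim]
    ext (a | b) <;>
      simp only [Fintype.card_fin, Nat.cast_ofNat, Sum.elim_inl, Sum.elim_inr, Pi.smul_apply,
        smul_eq_mul]
    · linear_combination (-8 : ℝ) * hsq
    · ring

/-- `q(K₂ ∨ 8K₁) = 6 + 4 * Real.sqrt 2` and `K₂ ∨ 8K₁` has no spanning tree with leaf degree at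
most 3. -/
theorem qRadius_K2_join_8K1 :
    qRadius ((⊤ : SimpleGraph (Fin 2)).graphJoin (⊥ : SimpleGraph (Fin 8))) = 6 + 4 * Real.sqrt 2 ∧
      ¬ HasSpanningTreeWithLeafDegLE ((⊤ : SimpleGraph (Fin 2)).graphJoin (⊥ : SimpleGraph (Fin 8))) 3 :=
  ⟨qRadius_K2_join_8K1_eq, fun h => by simpa using h.card_le_top_join_bot⟩
end
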